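/- arXiv:1507.04789 — 4 statements merged into one kernel-verified Lean document; each statement's English description precedes it below -/
import Mathlib

section
/- Let v be a positive semidefinite kernel on D, let r ≥ 1 and let Q : Fin r → D be knots such that the r×r Gram matrix G with entries G(k,l) = v(Q(k),Q(l)) is positive definite. Define b(s) ∈ ℝʳ by b(s)_k = v(s,Q(k)). Then the residual kernel w(s,t) = v(s,t) − b(s)ᵀ G⁻¹ b(t) is positive semidefinite. -/
/-!
The Gram matrix of `v` on the knots `Q` followed by points `s` is the block matrix
`[[G, Bᵀ], [B, K]]` with `B i k = v (s i) (Q k)` and `K i j = v (s i) (s j)`; it is positive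
semidefinite because `v` is, and its Schur complement
`K - B G⁻¹ Bᵀ` with respect to the positive definite block `G` is exactly the Gram matrix of the
residual kernel on `s`.
-/

section

open Matrix

variable {D ι κ : Type*}

def kernelMatrix (v : D → D → ℝ) (s : ι → D) (t : κ → D) : Matrix ι κ ℝ :=
  Matrix.of fun i j => v (s i) (t j)

def IsPosSemidefKernel (v : D → D → ℝ) : Prop :=
  ∀ (n : ℕ) (s : Fin n → D), (kernelMatrix v s s).PosSemidef

noncomputable def residualKernel [Fintype κ] [DecidableEq κ] (v : D → D → ℝ) (Q : κ → D)
    (s t : D) : ℝ :=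
  v s t - (fun k => v s (Q k)) ⬝ᵥ (kernelMatrix v Q Q)⁻¹ *ᵥ (fun k => v t (Q k))

theorem dotProduct_mulVec_self_eq_sum_sum [Fintype ι] (M : Matrix ι ι ℝ) (c : ι → ℝ) :
    c ⬝ᵥ M *ᵥ c = ∑ i, ∑ j, c i * c j * M i j := by
  simp only [dotProduct, mulVec, Finset.mul_sum]
  exact Finset.sum_congr rfl fun i _ => Finset.sum_congr rfl fun j _ => by ring

theorem kernelMatrix_residualKernel [Fintype κ] [DecidableEq κ] (v : D → D → ℝ) (Q : κ → D)
    (s : ι → D) :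
    kernelMatrix (residualKernel v Q) s s =
      kernelMatrix v s s -
        kernelMatrix v s Q * (kernelMatrix v Q Q)⁻¹ * (kernelMatrix v s Q)ᴴ := by
  ext i j
  simp [residualKernel, kernelMatrix, Matrix.mul_assoc, mul_apply, dotProduct, mulVec,
    Finset.mul_sum]

namespace IsPosSemidefKernel

variable {v : D → D → ℝ}

theorem of_symm_of_sum_nonneg (hsymm : ∀ s t, v s t = v t s)
    (hpsd : ∀ (n : ℕ) (s : Fin n → D) (c : Fin n → ℝ),
      0 ≤ ∑ i, ∑ j, c i * c j * v (s i) (s j)) :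
    IsPosSemidefKernel v := fun n s =>
  .of_dotProduct_mulVec_nonneg (Matrix.ext fun i j => hsymm (s j) (s i)) fun c => by
    simpa [dotProduct_mulVec_self_eq_sum_sum, kernelMatrix] using hpsd n s c

theorem posSemidef [Fintype ι] (hv : IsPosSemidefKernel v) (s : ι → D) :
    (kernelMatrix v s s).PosSemidef :=
  (posSemidef_submatrix_equiv (Fintype.equivFin ι).symm).mp (hv _ _)

theorem symm (hv : IsPosSemidefKernel v) (s t : D) : v s t = v t s := by
  simpa [kernelMatrix] using congrFun₂ (hv 2 ![s, t]).1 1 0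

theorem sum_nonneg (hv : IsPosSemidefKernel v) {n : ℕ} (s : Fin n → D) (c : Fin n → ℝ) :
    0 ≤ ∑ i, ∑ j, c i * c j * v (s i) (s j) := by
  simpa [dotProduct_mulVec_self_eq_sum_sum, kernelMatrix] using
    (hv n s).dotProduct_mulVec_nonneg c

theorem kernelMatrix_sumElim (hv : IsPosSemidefKernel v) (Q : κ → D) (s : ι → D) :
    kernelMatrix v (Sum.elim Q s) (Sum.elim Q s) =
      fromBlocks (kernelMatrix v Q Q) (kernelMatrix v s Q)ᴴ (kernelMatrix v s Q)
        (kernelMatrix v s s) := by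
  ext (k | i) (l | j) <;> simp [kernelMatrix, hv.symm]

theorem residualKernel [Fintype κ] [DecidableEq κ] (hv : IsPosSemidefKernel v) {Q : κ → D}
    (hQ : (kernelMatrix v Q Q).PosDef) :
    IsPosSemidefKernel (residualKernel v Q) := by
  intro n s
  have := hQ.isUnit.invertible
  have hschur := (PosDef.fromBlocks₁₁ _ _ hQ).mp <|
    hv.kernelMatrix_sumElim Q s ▸ hv.posSemidef (Sum.elim Q s)
  rwa [conjTranspose_conjTranspose, ← kernelMatrix_residualKernel] at hschur

end IsPosSemidefKernel

end

theorem residual_kernel_posSemidef_general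
    {D : Type*} (v : D → D → ℝ)
    (hsymm : ∀ s t, v s t = v t s)
    (hpsd : ∀ (n : ℕ) (s : Fin n → D) (c : Fin n → ℝ),
      0 ≤ ∑ i, ∑ j, c i * c j * v (s i) (s j))
    (r : ℕ) (Q : Fin r → D)
    (G : Matrix (Fin r) (Fin r) ℝ)
    (hG : ∀ k l, G k l = v (Q k) (Q l))
    (hGpd : G.PosDef)
    (b : D → Fin r → ℝ)
    (hb : ∀ s k, b s k = v s (Q k))
    (w : D → D → ℝ)
    (hw : ∀ s t, w s t = v s t - b s ⬝ᵥ (G⁻¹).mulVec (b t)) :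
    (∀ s t, w s t = w t s) ∧
    (∀ (n : ℕ) (s : Fin n → D) (c : Fin n → ℝ),
      0 ≤ ∑ i, ∑ j, c i * c j * w (s i) (s j)) := by
  obtain rfl : G = kernelMatrix v Q Q := Matrix.ext hG
  obtain rfl : b = fun s k => v s (Q k) := funext₂ hb
  obtain rfl : w = residualKernel v Q := funext₂ hw
  have hres := (IsPosSemidefKernel.of_symm_of_sum_nonneg hsymm hpsd).residualKernel hGpd
  exact ⟨hres.symm, fun _ => hres.sum_nonneg⟩

/-- For a PSD kernel `v`, knots `Q` with positive-definite Gram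
matrix `G`, the residual kernel `w(s,t) = v(s,t) − b(s)ᵀ G⁻¹ b(t)` is
positive semidefinite (symmetric with nonnegative quadratic forms). -/
theorem residual_kernel_posSemidef
    {D : Type*} (v : D → D → ℝ)
    (hsymm : ∀ s t, v s t = v t s)
    (hpsd : ∀ (n : ℕ) (s : Fin n → D) (c : Fin n → ℝ),
      0 ≤ ∑ i, ∑ j, c i * c j * v (s i) (s j))
    (r : ℕ) (hr : 1 ≤ r) (Q : Fin r → D)
    (G : Matrix (Fin r) (Fin r) ℝ)
    (hG : ∀ k l, G k l = v (Q k) (Q l))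
    (hGpd : G.PosDef)
    (b : D → Fin r → ℝ)
    (hb : ∀ s k, b s k = v s (Q k))
    (w : D → D → ℝ)
    (hw : ∀ s t, w s t = v s t - b s ⬝ᵥ (G⁻¹).mulVec (b t)) :
    (∀ s t, w s t = w t s) ∧
    (∀ (n : ℕ) (s : Fin n → D) (c : Fin n → ℝ),
      0 ≤ ∑ i, ∑ j, c i * c j * w (s i) (s j)) :=
  residual_kernel_posSemidef_general v hsymm hpsd r Q G hG hGpd b hb w hw
end

section
/- In the M-RA construction, for every m ∈ {0,…,M} the kernel vₘ is positive semidefinite: vₘ(s,t) = vₘ(t,s) for all s,t, and for every finite collection of points s₁,…,sₙ ∈ D and reals c₁,…,cₙ one has ∑_{i,j} cᵢ cⱼ vₘ(sᵢ,sⱼ) ≥ 0. -/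
open scoped BigOperators Matrix

private lemma MRA_dot_expand {r : ℕ} (A : Matrix (Fin r) (Fin r) ℝ) (x y : Fin r → ℝ) :
    x ⬝ᵥ A *ᵥ y = ∑ k, ∑ l, x k * A k l * y l := by
  simp only [dotProduct, Matrix.mulVec, Finset.mul_sum]
  exact Finset.sum_congr rfl fun k _ => Finset.sum_congr rfl fun l _ => by ring

private lemma MRA_bilin_expand {r n : ℕ} (A : Matrix (Fin r) (Fin r) ℝ)
    (u : Fin n → Fin r → ℝ) (c : Fin n → ℝ) :
    (∑ k, ∑ l, (∑ i, c i * u i k) * A k l * (∑ j, c j * u j l))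
      = ∑ i, ∑ j, c i * c j * (u i ⬝ᵥ A *ᵥ u j) := by
  calc (∑ k, ∑ l, (∑ i, c i * u i k) * A k l * (∑ j, c j * u j l))
      = ∑ k, ∑ l, ∑ i, ∑ j, c i * u i k * A k l * (c j * u j l) := by
        refine Finset.sum_congr rfl fun k _ => Finset.sum_congr rfl fun l _ => ?_
        rw [Finset.sum_mul, Finset.sum_mul]
        refine Finset.sum_congr rfl fun i _ => ?_
        rw [Finset.mul_sum]
    _ = ∑ k, ∑ i, ∑ l, ∑ j, c i * u i k * A k l * (c j * u j l) :=
        Finset.sum_congr rfl fun k _ => Finset.sum_comm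
    _ = ∑ i, ∑ k, ∑ l, ∑ j, c i * u i k * A k l * (c j * u j l) := Finset.sum_comm
    _ = ∑ i, ∑ k, ∑ j, ∑ l, c i * u i k * A k l * (c j * u j l) :=
        Finset.sum_congr rfl fun i _ => Finset.sum_congr rfl fun k _ => Finset.sum_comm
    _ = ∑ i, ∑ j, ∑ k, ∑ l, c i * u i k * A k l * (c j * u j l) :=
        Finset.sum_congr rfl fun i _ => Finset.sum_comm
    _ = ∑ i, ∑ j, c i * c j * (u i ⬝ᵥ A *ᵥ u j) := by
        refine Finset.sum_congr rfl fun i _ => Finset.sum_congr rfl fun j _ => ?_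
        rw [MRA_dot_expand, Finset.mul_sum]
        refine Finset.sum_congr rfl fun k _ => ?_
        rw [Finset.mul_sum]
        exact Finset.sum_congr rfl fun l _ => by ring

/-- In the M-RA construction, every remainder kernel `vₘ`,
`m = 0,…,M`, is positive semidefinite. -/
theorem MRA_remainder_kernels_posSemidef
    {D : Type*} {I : ℕ → Type*} [∀ m, DecidableEq (I m)]
    (C₀ : D → D → ℝ)
    (hC₀symm : ∀ s t, C₀ s t = C₀ t s)
    (hC₀psd : ∀ (n : ℕ) (s : Fin n → D) (c : Fin n → ℝ),
      0 ≤ ∑ i, ∑ j, c i * c j * C₀ (s i) (s j))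
    (M r : ℕ) (hM : 1 ≤ M) (hr : 1 ≤ r)
    (p : ∀ m : ℕ, D → I m)
    (hp0 : ∀ s t, p 0 s = p 0 t)
    (hnested : ∀ m < M, ∃ f : I (m + 1) → I m, ∀ s, p m s = f (p (m + 1) s))
    (Q : ∀ m : ℕ, I m → Fin r → D)
    (hQ : ∀ m < M, ∀ (i : I m) (k : Fin r), p m (Q m i k) = i)
    (v : ℕ → D → D → ℝ)
    (hv0 : ∀ s t, v 0 s t = C₀ s t)
    (b : ℕ → D → Fin r → ℝ)
    (hb : ∀ m < M, ∀ (s : D) (k : Fin r), b m s k = v m s (Q m (p m s) k))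
    (G : ∀ m : ℕ, I m → Matrix (Fin r) (Fin r) ℝ)
    (hG : ∀ m < M, ∀ (i : I m) (k l : Fin r), G m i k l = v m (Q m i k) (Q m i l))
    (hGpd : ∀ m < M, ∀ i : I m, (G m i).PosDef)
    (K : ∀ m : ℕ, I m → Matrix (Fin r) (Fin r) ℝ)
    (hK : ∀ m < M, ∀ i : I m, K m i = (G m i)⁻¹)
    (hvrec : ∀ m < M, ∀ s t : D, p (m + 1) s = p (m + 1) t →
      v (m + 1) s t = v m s t - b m s ⬝ᵥ (K m (p m s)).mulVec (b m t))
    (hvzero : ∀ m < M, ∀ s t : D, p (m + 1) s ≠ p (m + 1) t →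
      v (m + 1) s t = 0) :
    ∀ m ≤ M,
      (∀ s t, v m s t = v m t s) ∧
      (∀ (n : ℕ) (s : Fin n → D) (c : Fin n → ℝ),
        0 ≤ ∑ i, ∑ j, c i * c j * v m (s i) (s j)) := by
  intro m hm
  induction m with
  | zero =>
    refine ⟨fun s t => by rw [hv0, hv0]; exact hC₀symm s t, fun n s c => ?_⟩
    simp only [hv0]
    exact hC₀psd n s c
  | succ m ih =>
    have hmM : m < M := hm
    obtain ⟨hsym, hpsd⟩ := ih (le_of_lt hmM)
    obtain ⟨f, hf⟩ := hnested m hmM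
    have hGsym : ∀ i : I m, (G m i)ᵀ = G m i := by
      intro i; ext k l
      rw [Matrix.transpose_apply, hG m hmM, hG m hmM, hsym]
    have hKsym : ∀ i : I m, (K m i)ᵀ = K m i := by
      intro i; rw [hK m hmM, Matrix.transpose_nonsing_inv, hGsym]
    have hdot : ∀ (A : Matrix (Fin r) (Fin r) ℝ), Aᵀ = A →
        ∀ x y : Fin r → ℝ, x ⬝ᵥ A *ᵥ y = y ⬝ᵥ A *ᵥ x := by
      intro A hA x y
      calc x ⬝ᵥ A *ᵥ y = (x ᵥ* A) ⬝ᵥ y := Matrix.dotProduct_mulVec x A y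
        _ = (A *ᵥ x) ⬝ᵥ y := by rw [← Matrix.vecMul_transpose, hA]
        _ = y ⬝ᵥ A *ᵥ x := dotProduct_comm _ _
    constructor
    · intro s t
      by_cases h : p (m + 1) s = p (m + 1) t
      · rw [hvrec m hmM s t h, hvrec m hmM t s h.symm]
        have hpm : p m s = p m t := by rw [hf s, hf t, h]
        rw [hsym s t, hpm, hdot (K m (p m t)) (hKsym _) (b m s) (b m t)]
      · rw [hvzero m hmM s t h, hvzero m hmM t s (Ne.symm h)]
    · intro n s c
      classical
      have key : ∀ a : I (m + 1),
          0 ≤ ∑ i ∈ Finset.univ.filter (fun i => p (m + 1) (s i) = a),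
              ∑ j ∈ Finset.univ.filter (fun j => p (m + 1) (s j) = a),
                c i * c j * v (m + 1) (s i) (s j) := by
        intro a
        set i₀ : I m := f a with hi₀
        have hpmf : ∀ i : Fin n, p (m + 1) (s i) = a → p m (s i) = i₀ := by
          intro i hi; rw [hf, hi]
        set c' : Fin n → ℝ := fun i => if p (m + 1) (s i) = a then c i else 0 with hc'
        set u : Fin n → Fin r → ℝ := fun i k => v m (s i) (Q m i₀ k) with hu
        set w : Fin r → ℝ := fun k => ∑ i, c' i * u i k with hw
        set d : Fin r → ℝ := fun k => (-(K m i₀ *ᵥ w)) k with hd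
        have hdneg : d = -(K m i₀ *ᵥ w) := rfl
        have hGK : G m i₀ * K m i₀ = 1 := by
          rw [hK m hmM]
          exact Matrix.mul_nonsing_inv _ (hGpd m hmM i₀).det_pos.ne'.isUnit
        have hGd : G m i₀ *ᵥ d = -w := by
          rw [hdneg, Matrix.mulVec_neg, Matrix.mulVec_mulVec, hGK, Matrix.one_mulVec]
        set β : ℝ := w ⬝ᵥ K m i₀ *ᵥ w with hβ
        have hdw : d ⬝ᵥ w = -β := by
          rw [hdneg, neg_dotProduct, dotProduct_comm, hβ]
        have hexp : ∑ i, ∑ j,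
            Fin.append c' d i * Fin.append c' d j *
              v m (Fin.append s (Q m i₀) i) (Fin.append s (Q m i₀) j)
          = (∑ i, ∑ j, c' i * c' j * v m (s i) (s j))
            + (∑ i, ∑ k, c' i * d k * v m (s i) (Q m i₀ k))
            + ((∑ k, ∑ i, d k * c' i * v m (Q m i₀ k) (s i))
            + (∑ k, ∑ l, d k * d l * v m (Q m i₀ k) (Q m i₀ l))) := by
          rw [Fin.sum_univ_add]
          congr 1
          · rw [← Finset.sum_add_distrib]
            refine Finset.sum_congr rfl fun i _ => ?_
            rw [Fin.sum_univ_add]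
            simp only [Fin.append_left, Fin.append_right]
          · rw [← Finset.sum_add_distrib]
            refine Finset.sum_congr rfl fun k _ => ?_
            rw [Fin.sum_univ_add]
            simp only [Fin.append_left, Fin.append_right]
        have hT2 : (∑ i, ∑ k, c' i * d k * v m (s i) (Q m i₀ k)) = -β := by
          rw [← hdw, Finset.sum_comm]
          simp only [dotProduct, hw]
          refine Finset.sum_congr rfl fun k _ => ?_
          rw [Finset.mul_sum]
          refine Finset.sum_congr rfl fun i _ => ?_
          simp only [hu]
          ring
        have hT3 : (∑ k, ∑ i, d k * c' i * v m (Q m i₀ k) (s i)) = -β := by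
          rw [← hdw]
          simp only [dotProduct, hw]
          refine Finset.sum_congr rfl fun k _ => ?_
          rw [Finset.mul_sum]
          refine Finset.sum_congr rfl fun i _ => ?_
          simp only [hu]
          rw [hsym (Q m i₀ k) (s i)]
          ring
        have hT4 : (∑ k, ∑ l, d k * d l * v m (Q m i₀ k) (Q m i₀ l)) = β := by
          have h1 : (∑ k, ∑ l, d k * d l * v m (Q m i₀ k) (Q m i₀ l))
              = d ⬝ᵥ G m i₀ *ᵥ d := by
            simp only [dotProduct, Matrix.mulVec]
            refine Finset.sum_congr rfl fun k _ => ?_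
            rw [Finset.mul_sum]
            refine Finset.sum_congr rfl fun l _ => ?_
            rw [hG m hmM]
            ring
          rw [h1, hGd, dotProduct_neg, hdw, neg_neg]
        have H := hpsd (n + r) (Fin.append s (Q m i₀)) (Fin.append c' d)
        rw [hexp, hT2, hT3, hT4] at H
        have H' : 0 ≤ (∑ i, ∑ j, c' i * c' j * v m (s i) (s j)) - β := by linarith
        have hsplit : ∀ F : Fin n → Fin n → ℝ,
            (∑ i, ∑ j, c' i * c' j * F i j)
              = ∑ i ∈ Finset.univ.filter (fun i => p (m + 1) (s i) = a),
                  ∑ j ∈ Finset.univ.filter (fun j => p (m + 1) (s j) = a),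
                    c i * c j * F i j := by
          intro F
          rw [Finset.sum_filter]
          refine Finset.sum_congr rfl fun i _ => ?_
          by_cases hi : p (m + 1) (s i) = a
          · rw [if_pos hi, Finset.sum_filter]
            refine Finset.sum_congr rfl fun j _ => ?_
            by_cases hj : p (m + 1) (s j) = a
            · rw [if_pos hj]; simp [hc', hi, hj]
            · rw [if_neg hj]; simp [hc', hj]
          · rw [if_neg hi]
            refine Finset.sum_eq_zero fun j _ => ?_
            simp [hc', hi]
        have e3 : β = ∑ i, ∑ j, c' i * c' j * (u i ⬝ᵥ K m i₀ *ᵥ u j) := by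
          rw [hβ, MRA_dot_expand]
          simp only [hw]
          exact MRA_bilin_expand (K m i₀) u c'
        have e2 : (∑ i, ∑ j, c' i * c' j * (u i ⬝ᵥ K m i₀ *ᵥ u j))
            = ∑ i ∈ Finset.univ.filter (fun i => p (m + 1) (s i) = a),
                ∑ j ∈ Finset.univ.filter (fun j => p (m + 1) (s j) = a),
                  c i * c j * (u i ⬝ᵥ K m i₀ *ᵥ u j) := hsplit _
        have e1 : (∑ i, ∑ j, c' i * c' j * v m (s i) (s j))
            = ∑ i ∈ Finset.univ.filter (fun i => p (m + 1) (s i) = a),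
                ∑ j ∈ Finset.univ.filter (fun j => p (m + 1) (s j) = a),
                  c i * c j * v m (s i) (s j) := hsplit _
        have e4 : (∑ i ∈ Finset.univ.filter (fun i => p (m + 1) (s i) = a),
              ∑ j ∈ Finset.univ.filter (fun j => p (m + 1) (s j) = a),
                c i * c j * v (m + 1) (s i) (s j))
            = (∑ i ∈ Finset.univ.filter (fun i => p (m + 1) (s i) = a),
                ∑ j ∈ Finset.univ.filter (fun j => p (m + 1) (s j) = a),
                  c i * c j * v m (s i) (s j))
              - ∑ i ∈ Finset.univ.filter (fun i => p (m + 1) (s i) = a),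
                  ∑ j ∈ Finset.univ.filter (fun j => p (m + 1) (s j) = a),
                    c i * c j * (u i ⬝ᵥ K m i₀ *ᵥ u j) := by
          rw [← Finset.sum_sub_distrib]
          refine Finset.sum_congr rfl fun i hi => ?_
          rw [← Finset.sum_sub_distrib]
          refine Finset.sum_congr rfl fun j hj => ?_
          have hi' := (Finset.mem_filter.mp hi).2
          have hj' := (Finset.mem_filter.mp hj).2
          have hbu : b m (s i) = u i :=
            funext fun k => by rw [hb m hmM, hpmf i hi']
          have hbu' : b m (s j) = u j :=
            funext fun k => by rw [hb m hmM, hpmf j hj']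
          rw [hvrec m hmM (s i) (s j) (hi'.trans hj'.symm), hpmf i hi', hbu, hbu']
          ring
        rw [e4, ← e1, ← e2, ← e3]
        exact H'
      have h1 : ∀ i : Fin n, (∑ j, c i * c j * v (m + 1) (s i) (s j))
          = ∑ j ∈ Finset.univ.filter (fun j => p (m + 1) (s j) = p (m + 1) (s i)),
              c i * c j * v (m + 1) (s i) (s j) := by
        intro i
        rw [Finset.sum_filter]
        refine Finset.sum_congr rfl fun j _ => ?_
        by_cases h : p (m + 1) (s j) = p (m + 1) (s i)
        · rw [if_pos h]
        · rw [if_neg h, hvzero m hmM _ _ (fun hh => h hh.symm), mul_zero]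
      calc (0:ℝ) ≤ ∑ a ∈ Finset.univ.image (fun i => p (m + 1) (s i)),
            ∑ i ∈ Finset.univ.filter (fun i => p (m + 1) (s i) = a),
              ∑ j ∈ Finset.univ.filter (fun j => p (m + 1) (s j) = a),
                c i * c j * v (m + 1) (s i) (s j) :=
          Finset.sum_nonneg fun a _ => key a
        _ = ∑ a ∈ Finset.univ.image (fun i => p (m + 1) (s i)),
            ∑ i ∈ Finset.univ.filter (fun i => p (m + 1) (s i) = a),
              ∑ j ∈ Finset.univ.filter (fun j => p (m + 1) (s j) = p (m + 1) (s i)),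
                c i * c j * v (m + 1) (s i) (s j) := by
          refine Finset.sum_congr rfl fun a _ => Finset.sum_congr rfl fun i hi => ?_
          rw [(Finset.mem_filter.mp hi).2]
        _ = ∑ i, ∑ j ∈ Finset.univ.filter (fun j => p (m + 1) (s j) = p (m + 1) (s i)),
              c i * c j * v (m + 1) (s i) (s j) :=
          Finset.sum_fiberwise_of_maps_to
            (fun i _ => Finset.mem_image_of_mem _ (Finset.mem_univ i)) _
        _ = ∑ i, ∑ j, c i * c j * v (m + 1) (s i) (s j) :=
          Finset.sum_congr rfl fun i _ => (h1 i).symm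
end

section
/- In the M-RA construction, if two locations s,t ∈ D lie in the same region at the finest resolution, i.e., p_M(s) = p_M(t), then the M-RA covariance is exact: C_M(s,t) = C₀(s,t). In particular, C_M(s,s) = C₀(s,s) for every s ∈ D, so the M-RA preserves all variances. -/
open scoped BigOperators Matrix

/-- If two locations lie in the same region at the finest
resolution, the M-RA covariance is exact: `C_M(s,t) = C₀(s,t)`; in
particular all variances are preserved. -/
theorem MRA_covariance_exact_within_finest_region
    {D : Type*} {I : ℕ → Type*} [∀ m, DecidableEq (I m)]
    (C₀ : D → D → ℝ)
    (hC₀symm : ∀ s t, C₀ s t = C₀ t s)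
    (hC₀psd : ∀ (n : ℕ) (s : Fin n → D) (c : Fin n → ℝ),
      0 ≤ ∑ i, ∑ j, c i * c j * C₀ (s i) (s j))
    (M r : ℕ) (hM : 1 ≤ M) (hr : 1 ≤ r)
    (p : ∀ m : ℕ, D → I m)
    (hp0 : ∀ s t, p 0 s = p 0 t)
    (hnested : ∀ m < M, ∃ f : I (m + 1) → I m, ∀ s, p m s = f (p (m + 1) s))
    (Q : ∀ m : ℕ, I m → Fin r → D)
    (hQ : ∀ m < M, ∀ (i : I m) (k : Fin r), p m (Q m i k) = i)
    (v : ℕ → D → D → ℝ)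
    (hv0 : ∀ s t, v 0 s t = C₀ s t)
    (b : ℕ → D → Fin r → ℝ)
    (hb : ∀ m < M, ∀ (s : D) (k : Fin r), b m s k = v m s (Q m (p m s) k))
    (G : ∀ m : ℕ, I m → Matrix (Fin r) (Fin r) ℝ)
    (hG : ∀ m < M, ∀ (i : I m) (k l : Fin r), G m i k l = v m (Q m i k) (Q m i l))
    (hGpd : ∀ m < M, ∀ i : I m, (G m i).PosDef)
    (K : ∀ m : ℕ, I m → Matrix (Fin r) (Fin r) ℝ)
    (hK : ∀ m < M, ∀ i : I m, K m i = (G m i)⁻¹)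
    (hvrec : ∀ m < M, ∀ s t : D, p (m + 1) s = p (m + 1) t →
      v (m + 1) s t = v m s t - b m s ⬝ᵥ (K m (p m s)).mulVec (b m t))
    (hvzero : ∀ m < M, ∀ s t : D, p (m + 1) s ≠ p (m + 1) t →
      v (m + 1) s t = 0)
    (CM : D → D → ℝ)
    (hCM : ∀ s t : D, CM s t =
      (∑ m ∈ Finset.range M,
        if p m s = p m t then b m s ⬝ᵥ (K m (p m s)).mulVec (b m t) else 0)
      + v M s t) :
    (∀ s t : D, p M s = p M t → CM s t = C₀ s t) ∧
    (∀ s : D, CM s s = C₀ s s) := by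
  have main : ∀ s t : D, p M s = p M t → CM s t = C₀ s t := by
    intro s t hst
    -- all coarser levels agree
    have hall : ∀ j m : ℕ, m + j = M → p m s = p m t := by
      intro j
      induction j with
      | zero =>
        intro m hm
        have hmM : m = M := by omega
        subst hmM
        exact hst
      | succ j ih =>
        intro m hm
        have hmM : m < M := by omega
        obtain ⟨f, hf⟩ := hnested m hmM
        have h1 : p (m + 1) s = p (m + 1) t := ih (m + 1) (by omega)
        rw [hf s, hf t, h1]
    have hterm : ∀ m ∈ Finset.range M,
        (if p m s = p m t then b m s ⬝ᵥ (K m (p m s)).mulVec (b m t) else 0)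
          = v m s t - v (m + 1) s t := by
      intro m hm
      have hmM : m < M := Finset.mem_range.mp hm
      have hpm : p m s = p m t := hall (M - m) m (by omega)
      have hpm1 : p (m + 1) s = p (m + 1) t := hall (M - (m + 1)) (m + 1) (by omega)
      rw [if_pos hpm, hvrec m hmM s t hpm1]
      ring
    rw [hCM, Finset.sum_congr rfl hterm, Finset.sum_range_sub' (fun m => v m s t)]
    rw [hv0]
    ring
  exact ⟨main, fun s => main s s rfl⟩
end

section
/- (Matrix identity for the recursion of the posterior basis-function matrices in Proposition 2) Under the matrix setup, for any a×c matrix P, a×r matrix Q, a×n matrix M, and n×c matrix C: P − (Q K Bᵀ + M) Σ⁻¹ C = (P − M V⁻¹ C) − (Q − M V⁻¹ B) K̃ (Bᵀ V⁻¹ C). -/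
open scoped Matrix

lemma key_K_identity {r : ℕ} (K X Kt : Matrix (Fin r) (Fin r) ℝ)
    (hK : IsUnit K.det) (hKt : IsUnit (K⁻¹ + X).det) (hKtdef : Kt = (K⁻¹ + X)⁻¹) :
    K - K * X * Kt = Kt := by
  have h1 : Kt * (K⁻¹ + X) = 1 := by
    rw [hKtdef]; exact Matrix.nonsing_inv_mul _ hKt
  have h2 : (K⁻¹ + X) * Kt = 1 := by
    rw [hKtdef]; exact Matrix.mul_nonsing_inv _ hKt
  have hKK : K * K⁻¹ = 1 := Matrix.mul_nonsing_inv _ hK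
  calc K - K * X * Kt = K * ((K⁻¹ + X) * Kt) - K * X * Kt := by rw [h2, mul_one]
    _ = Kt := by
        rw [Matrix.add_mul, Matrix.mul_add, ← Matrix.mul_assoc, ← Matrix.mul_assoc, hKK,
          Matrix.one_mul]
        abel

/-- Matrix identity behind the recursion of the posterior
basis-function matrices in Proposition 2:
`P − (Q K Bᵀ + M) Σ⁻¹ C = (P − M V⁻¹ C) − (Q − M V⁻¹ B) K̃ (Bᵀ V⁻¹ C)`. -/
theorem posterior_basis_function_recursion
    {n r : ℕ}
    (K : Matrix (Fin r) (Fin r) ℝ) (hK : IsUnit K.det)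
    (V : Matrix (Fin n) (Fin n) ℝ) (hV : IsUnit V.det)
    (B : Matrix (Fin n) (Fin r) ℝ)
    (hKt : IsUnit (K⁻¹ + Bᵀ * V⁻¹ * B).det)
    (Kt : Matrix (Fin r) (Fin r) ℝ) (hKtdef : Kt = (K⁻¹ + Bᵀ * V⁻¹ * B)⁻¹)
    (Sig : Matrix (Fin n) (Fin n) ℝ) (hSig : Sig = B * K * Bᵀ + V)
    {a c : ℕ}
    (P : Matrix (Fin a) (Fin c) ℝ) (Q : Matrix (Fin a) (Fin r) ℝ)
    (M : Matrix (Fin a) (Fin n) ℝ) (C : Matrix (Fin n) (Fin c) ℝ) :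
    P - (Q * K * Bᵀ + M) * Sig⁻¹ * C =
      (P - M * V⁻¹ * C) - (Q - M * V⁻¹ * B) * Kt * (Bᵀ * V⁻¹ * C) := by
  have hVu : IsUnit V := (Matrix.isUnit_iff_isUnit_det V).mpr hV
  have hKu : IsUnit K := (Matrix.isUnit_iff_isUnit_det K).mpr hK
  have hACu : IsUnit (K⁻¹ + Bᵀ * V⁻¹ * B) :=
    (Matrix.isUnit_iff_isUnit_det _).mpr hKt
  have hSigInv : Sig⁻¹ = V⁻¹ - V⁻¹ * B * Kt * Bᵀ * V⁻¹ := by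
    rw [hSig, add_comm, Matrix.add_mul_mul_inv_eq_sub V B K Bᵀ hVu hKu hACu, hKtdef]
  have hkey : K - K * (Bᵀ * V⁻¹ * B) * Kt = Kt :=
    key_K_identity K (Bᵀ * V⁻¹ * B) Kt hK hKt hKtdef
  rw [hSigInv]
  have expand :
      (Q * K * Bᵀ + M) * (V⁻¹ - V⁻¹ * B * Kt * Bᵀ * V⁻¹) * C =
      Q * (K - K * (Bᵀ * V⁻¹ * B) * Kt) * (Bᵀ * V⁻¹ * C)
        + M * V⁻¹ * C - M * V⁻¹ * B * Kt * (Bᵀ * V⁻¹ * C) := by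
    simp only [Matrix.mul_sub, Matrix.sub_mul, Matrix.add_mul, Matrix.mul_add,
      Matrix.mul_assoc]
    abel
  rw [expand, hkey]
  simp only [Matrix.sub_mul, Matrix.mul_assoc]
  abel
end
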